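/- arXiv:1608.07227 — 2 statements merged into one kernel-verified Lean document; each statement's English description precedes it below -/
import Mathlib

section
/- For every n ∈ ℕ and |p| < 1, ∑_{j=0}^∞ ∑_{k=0}^{n+j} (min(n,j,k,n+j-k)+1) · j·k · |p|^{2j} = (n+1)²|p|²/(1-|p|²)³ + 3(n+1)|p|⁴/(1-|p|²)⁴. -/
/-!
The weight `min (n, j, k, n + j - k) + 1` counts the ways of writing `k = a + b` with `a ≤ n`,
`b ≤ j`; it is symmetric under `k ↦ n + j - k` and sums to `(n + 1) (j + 1)`. Hence the inner sum
is `(n + 1) · j (j + 1) (n + j) / 2 · x ^ j` with `x = ‖p‖²`. Since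
`j (j + 1) (n + j) / 2 = (n + 1) C(j + 1, 2) + 3 C(j + 1, 3)` and
`∑ⱼ C(j + 1, k) xʲ = x ^ (k - 1) / (1 - x) ^ (k + 1)`, the two terms of the closed form appear.
-/

open Finset

theorem hasSum_choose_add_mul_geometric_of_norm_lt_one {𝕜 : Type*} [NormedDivisionRing 𝕜]
    [HasSummableGeomSeries 𝕜] {m k : ℕ} (hmk : m ≤ k) {r : 𝕜} (hr : ‖r‖ < 1) :
    HasSum (fun j ↦ ((j + m).choose k : 𝕜) * r ^ j) (r ^ (k - m) / (1 - r) ^ (k + 1)) := by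
  refine (hasSum_nat_add_iff' (k - m)).mp ?_
  have head : ∑ j ∈ range (k - m), ((j + m).choose k : 𝕜) * r ^ j = 0 :=
    sum_eq_zero fun j hj ↦ by
      rw [Nat.choose_eq_zero_of_lt (by rw [mem_range] at hj; omega), Nat.cast_zero, zero_mul]
  rw [head, sub_zero, div_eq_mul_one_div]
  refine ((hasSum_choose_mul_geometric_of_norm_lt_one k hr).mul_left (r ^ (k - m))).congr_fun
    fun i ↦ ?_
  rw [show i + (k - m) + m = i + k by omega, add_comm i (k - m), pow_add, ← mul_assoc, ← mul_assoc,
    (Nat.cast_commute _ _).eq]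

theorem Nat.cast_choose_three {K : Type*} [Field K] [CharZero K] (a : ℕ) :
    (a.choose 3 : K) = a * (a - 1) * (a - 2) / 6 := by
  simp only [Nat.cast_choose_eq_descPochhammer_div, descPochhammer_succ_eval, descPochhammer_zero,
    Polynomial.eval_one, Nat.factorial]
  push_cast
  ring

theorem two_mul_sum_range_mul_of_symm {N : ℕ} (f : ℕ → ℕ) (hf : ∀ k ≤ N, f (N - k) = f k) :
    2 * ∑ k ∈ range (N + 1), f k * k = N * ∑ k ∈ range (N + 1), f k := by
  have reflect : ∑ k ∈ range (N + 1), f k * k = ∑ k ∈ range (N + 1), f k * (N - k) := by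
    rw [← sum_range_reflect]
    refine sum_congr rfl fun k hk ↦ ?_
    rw [Nat.add_sub_cancel, hf k (Nat.lt_succ_iff.mp (mem_range.mp hk))]
  calc 2 * ∑ k ∈ range (N + 1), f k * k
      = ∑ k ∈ range (N + 1), f k * (k + (N - k)) := by
        rw [two_mul]; nth_rw 2 [reflect]; rw [← sum_add_distrib]; simp only [mul_add]
    _ = N * ∑ k ∈ range (N + 1), f k := by
        rw [mul_sum]
        refine sum_congr rfl fun k hk ↦ ?_
        rw [Nat.add_sub_cancel' (Nat.lt_succ_iff.mp (mem_range.mp hk)), mul_comm]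

theorem sum_range_min_add_one_of_le {n j : ℕ} (h : n ≤ j) :
    ∑ k ∈ range (n + j + 1), (min (min n j) (min k (n + j - k)) + 1) = (n + 1) * (j + 1) := by
  obtain ⟨d, rfl⟩ := Nat.exists_eq_add_of_le h
  rw [show n + (n + d) + 1 = n + (d + 1) + n by ring, sum_range_add, sum_range_add]
  have rise : ∀ k ∈ range n, min (min n (n + d)) (min k (n + (n + d) - k)) + 1 = k + 1 := by
    intro k hk; rw [mem_range] at hk; omega
  have plateau : ∀ i ∈ range (d + 1),
      min (min n (n + d)) (min (n + i) (n + (n + d) - (n + i))) + 1 = n + 1 := by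
    intro i hi; rw [mem_range] at hi; omega
  have fall : ∀ i ∈ range n, min (min n (n + d))
      (min (n + (d + 1) + i) (n + (n + d) - (n + (d + 1) + i))) + 1 = n - i := by
    intro i hi; rw [mem_range] at hi; omega
  have rise_fall : ∀ k ∈ range n, k + 1 + (n - k) = n + 1 := by
    intro k hk; rw [mem_range] at hk; omega
  rw [sum_congr rfl rise, sum_congr rfl plateau, sum_congr rfl fall, add_right_comm,
    ← sum_add_distrib, sum_congr rfl rise_fall]
  simp only [sum_const, card_range, smul_eq_mul]
  ring

theorem sum_range_min_add_one (n j : ℕ) :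
    ∑ k ∈ range (n + j + 1), (min (min n j) (min k (n + j - k)) + 1) = (n + 1) * (j + 1) := by
  rcases le_total n j with h | h
  · exact sum_range_min_add_one_of_le h
  · simpa only [min_comm j n, add_comm j n, Nat.mul_comm (j + 1)] using
      sum_range_min_add_one_of_le h

theorem two_mul_sum_range_min_add_one_mul (n j : ℕ) :
    2 * ∑ k ∈ range (n + j + 1), (min (min n j) (min k (n + j - k)) + 1) * k
      = (n + j) * ((n + 1) * (j + 1)) := by
  rw [two_mul_sum_range_mul_of_symm _ fun k hk ↦ by omega, sum_range_min_add_one]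

theorem sum_range_min_add_one_mul_mul (n j : ℕ) :
    ∑ k ∈ range (n + j + 1),
        ((min (min n j) (min k (n + j - k)) + 1 : ℕ) : ℝ) * ((j : ℝ) * (k : ℝ))
      = (n + 1) * (j * (j + 1) * (n + j) / 2) := by
  have h : ∑ k ∈ range (n + j + 1), ((min (min n j) (min k (n + j - k)) + 1 : ℕ) : ℝ) * k
      = (n + j) * ((n + 1) * (j + 1)) / 2 := by
    rw [eq_div_iff two_ne_zero, mul_comm]
    exact_mod_cast two_mul_sum_range_min_add_one_mul n j
  simp only [mul_left_comm _ (j : ℝ), ← mul_sum, h]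
  ring

theorem stmt_14 (n : ℕ) (p : ℂ) (hp : ‖p‖ < 1) :
    HasSum (fun j : ℕ => ∑ k ∈ Finset.range (n + j + 1),
        ((min (min n j) (min k (n + j - k)) + 1 : ℕ) : ℝ) * ((j : ℝ) * (k : ℝ)) *
          ‖p‖ ^ (2 * j))
      (((n : ℝ) + 1) ^ 2 * ‖p‖ ^ 2 / (1 - ‖p‖ ^ 2) ^ 3 +
        3 * ((n : ℝ) + 1) * ‖p‖ ^ 4 / (1 - ‖p‖ ^ 2) ^ 4) := by
  have hx : ‖‖p‖ ^ 2‖ < 1 := by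
    rw [norm_pow, norm_norm]
    exact pow_lt_one₀ (norm_nonneg p) hp two_ne_zero
  have pairs : HasSum (fun j ↦ ((j + 1).choose 2 : ℝ) * (‖p‖ ^ 2) ^ j)
      (‖p‖ ^ 2 / (1 - ‖p‖ ^ 2) ^ 3) := by
    simpa using hasSum_choose_add_mul_geometric_of_norm_lt_one (m := 1) (k := 2) (by norm_num) hx
  have triples : HasSum (fun j ↦ ((j + 1).choose 3 : ℝ) * (‖p‖ ^ 2) ^ j)
      (‖p‖ ^ 4 / (1 - ‖p‖ ^ 2) ^ 4) := by
    simpa [← pow_mul] using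
      hasSum_choose_add_mul_geometric_of_norm_lt_one (m := 1) (k := 3) (by norm_num) hx
  simp only [mul_div_assoc]
  refine ((pairs.mul_left _).add (triples.mul_left _)).congr_fun fun j ↦ ?_
  rw [← sum_mul, sum_range_min_add_one_mul_mul, pow_mul, Nat.cast_choose_two,
    Nat.cast_choose_three]
  push_cast
  ring
end

section
/- Suppose p : ℝ → ℂ with |p| < 1 satisfies i ṗ/(1+y)² = (p/6)(2y|a|² + conj(b)a) where y = |p|²/(1-|p|²) and a, b : ℝ → ℂ are differentiable. Then ẏ = (1/3) y (1+y)³ Im(conj(b) a). -/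
/-!
With `r = |p|²` we have `y = r / (1 - r)`, so `ẏ = ṙ / (1 - r)² = (1 + y)² ṙ` and
`ṙ = 2 Re(ṗ p̄)`. Solving the equation for `ṗ` gives `ṗ p̄ = -i (1 + y)² r w / 6` with
`w = 2y|a|² + b̄a`, whose real part is `(1 + y)² r Im(b̄a) / 6` since `2y|a|²` is real.
Finally `r (1 + y) = y`.
-/

open Complex ComplexConjugate

theorem HasDerivAt.div_one_sub {r : ℝ → ℝ} {r' t : ℝ} (hr : HasDerivAt r r' t) (h : r t ≠ 1) :
    HasDerivAt (fun s => r s / (1 - r s)) (r' / (1 - r t) ^ 2) t := by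
  have hne : 1 - r t ≠ 0 := sub_ne_zero.mpr h.symm
  refine (hr.div (hr.const_sub 1) hne).congr_deriv ?_
  ring

theorem Complex.re_mul_conj_of_I_mul_eq {p w u : ℂ} {k : ℝ} (h : I * w = k * p * u) :
    (w * conj p).re = k * ‖p‖ ^ 2 * u.im := by
  have hw : w * conj p = -I * ((k * ‖p‖ ^ 2 : ℝ) * u) := by
    have hnorm : ((‖p‖ ^ 2 : ℝ) : ℂ) = p * conj p := by
      rw [ofReal_pow, ← mul_conj']
    push_cast at hnorm ⊢
    rw [hnorm]
    linear_combination (-I * conj p) * h + w * conj p * I_sq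
  rw [hw, neg_mul, neg_re, I_mul_re, neg_neg, im_ofReal_mul]

theorem stmt_19_general (b a p : ℝ → ℂ) (y : ℝ → ℝ)
    (hdp : Differentiable ℝ p)
    (hpbound : ∀ t : ℝ, ‖p t‖ < 1)
    (hy : ∀ t : ℝ, y t = ‖p t‖ ^ 2 / (1 - ‖p t‖ ^ 2))
    (hpeq : ∀ t : ℝ,
      Complex.I * deriv p t / ((1 + y t : ℝ) : ℂ) ^ 2 =
        (p t / 6) * (2 * (y t : ℂ) * (‖a t‖ : ℂ) ^ 2 +
          (starRingEnd ℂ) (b t) * a t)) :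
    ∀ t : ℝ, deriv y t = (1 / 3) * y t * (1 + y t) ^ 3 * ((starRingEnd ℂ) (b t) * a t).im := by
  intro t
  have hr : ‖p t‖ ^ 2 < 1 := pow_lt_one₀ (norm_nonneg _) (hpbound t) two_ne_zero
  have hyd : HasDerivAt y (2 * inner ℝ (p t) (deriv p t) / (1 - ‖p t‖ ^ 2) ^ 2) t := by
    rw [funext hy]
    exact (hdp t).hasDerivAt.norm_sq.div_one_sub hr.ne
  have hy_nonneg : 0 ≤ y t := hy t ▸ div_nonneg (sq_nonneg _) (sub_nonneg.mpr hr.le)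
  have hc : ((1 + y t : ℝ) : ℂ) ≠ 0 := ofReal_ne_zero.mpr (by linarith)
  have hpdot : I * deriv p t = ((1 + y t) ^ 2 : ℝ) * p t *
      ((2 * (y t : ℂ) * (‖a t‖ : ℂ) ^ 2 + (starRingEnd ℂ) (b t) * a t) / 6) := by
    have h := hpeq t
    rw [div_eq_iff (pow_ne_zero 2 hc)] at h
    rw [h]
    push_cast
    ring
  have hinner : inner ℝ (p t) (deriv p t) =
      (1 + y t) ^ 2 * ‖p t‖ ^ 2 * (((starRingEnd ℂ) (b t) * a t).im / 6) := by
    rw [Complex.inner, re_mul_conj_of_I_mul_eq hpdot]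
    have hreal : (2 * (y t : ℂ) * (‖a t‖ : ℂ) ^ 2).im = 0 := by norm_cast
    rw [div_ofNat_im, add_im, hreal, zero_add]
  rw [hyd.deriv, hinner, hy t]
  field_simp [(sub_pos.mpr hr).ne']
  ring

theorem stmt_19 (b a p : ℝ → ℂ) (y : ℝ → ℝ)
    (hdb : Differentiable ℝ b) (hda : Differentiable ℝ a) (hdp : Differentiable ℝ p)
    (hpbound : ∀ t : ℝ, ‖p t‖ < 1)
    (hy : ∀ t : ℝ, y t = ‖p t‖ ^ 2 / (1 - ‖p t‖ ^ 2))
    (hpeq : ∀ t : ℝ,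
      Complex.I * deriv p t / ((1 + y t : ℝ) : ℂ) ^ 2 =
        (p t / 6) * (2 * (y t : ℂ) * (‖a t‖ : ℂ) ^ 2 +
          (starRingEnd ℂ) (b t) * a t)) :
    ∀ t : ℝ, deriv y t = (1 / 3) * y t * (1 + y t) ^ 3 * ((starRingEnd ℂ) (b t) * a t).im :=
  stmt_19_general b a p y hdp hpbound hy hpeq
end
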